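/- Let (h_0, ..., h_d) be nonnegative integers with h_0 = 1, a = ∑ h_i, and define c_k as the unique integer with ∑_{i=0}^{c_k-1} h_i < k+1 ≤ ∑_{i=0}^{c_k} h_i for 1 ≤ k ≤ a-1, c_0 = 0. Suppose that ∂h_j := ∑_{i=0}^j (h_i - h_{d-i}) satisfies ∂h_j > 0 for all 0 ≤ j ≤ ⌊(d-1)/2⌋ and h_d = 0. Then for every even i with 2 ≤ i ≤ a-1, one has c_{i/2} + c_{a - i/2} ≤ d. -/
import Mathlib


open Finset

private lemma key_split (d : ℕ) (h : ℕ → ℕ) (j : ℕ) (hj : j ≤ d) :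
    ∑ i ∈ range (d + 1), h i
      = (∑ i ∈ range (d - j), h i) + ∑ i ∈ range (j + 1), h (d - i) := by
  have hd : d + 1 = (d - j) + (j + 1) := by omega
  rw [hd, Finset.sum_range_add]
  congr 1
  rw [← Finset.sum_range_reflect (fun i => h (d - j + i)) (j + 1)]
  apply Finset.sum_congr rfl
  intro i hi
  simp only [Finset.mem_range] at hi
  congr 1
  omega

/-- if all partial sums `∂h_j`, `j ≤ ⌊(d-1)/2⌋`, are positive and
`h_d = 0`, then the crossing indices satisfy `c_{i/2} + c_{a-i/2} ≤ d` for all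
even `i` with `2 ≤ i ≤ a - 1`. -/
theorem stmt_12 (d : ℕ) (h : ℕ → ℕ) (h0 : h 0 = 1) (hhd : h d = 0)
    (a : ℕ) (ha : a = ∑ i ∈ range (d + 1), h i)
    (c : ℕ → ℕ) (hc0 : c 0 = 0)
    (hc : ∀ k, 1 ≤ k → k ≤ a - 1 →
      (∑ i ∈ range (c k), h i < k + 1 ∧ k + 1 ≤ ∑ i ∈ range (c k + 1), h i))
    (hpos : ∀ j, j ≤ (d - 1) / 2 →
      0 < ∑ i ∈ range (j + 1), ((h i : ℤ) - (h (d - i) : ℤ))) :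
    ∀ i, Even i → 2 ≤ i → i ≤ a - 1 → c (i / 2) + c (a - i / 2) ≤ d := by
  intro i hie h2 hia
  have hd1 : 1 ≤ d := by
    rcases Nat.eq_zero_or_pos d with hd | hd
    · subst hd; omega
    · exact hd
  have hmono : ∀ m n, m ≤ n → (∑ x ∈ range m, h x) ≤ ∑ x ∈ range n, h x := by
    intro m n hmn
    exact Finset.sum_le_sum_of_subset (Finset.range_subset_range.2 hmn)
  obtain ⟨ki, hki⟩ := hie
  set k := i / 2 with hk
  have hk2 : 2 * k = i := by omega
  have ha3 : 3 ≤ a := by omega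
  have hk1 : 1 ≤ k := by omega
  have hkk : k ≤ a - 1 := by omega
  have hak1 : 1 ≤ a - k := by omega
  have hakk : a - k ≤ a - 1 := by omega
  obtain ⟨hp1, hp2⟩ := hc k hk1 hkk
  obtain ⟨hq1, hq2⟩ := hc (a - k) hak1 hakk
  by_contra hcon
  push_neg at hcon
  have hHp : (∑ x ∈ range (c k), h x) ≤ k := by omega
  have hHq : (∑ x ∈ range (c (a - k)), h x) ≤ a - k := by omega
  rcases Nat.eq_zero_or_pos (c k) with hck0 | hck1
  · -- c k = 0, so c (a-k) ≥ d + 1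
    have hq : d + 1 ≤ c (a - k) := by omega
    have := hmono (d + 1) (c (a - k)) hq
    omega
  · -- c k ≥ 1
    have hpd : c k ≤ d := by
      by_contra hpd
      push_neg at hpd
      have := hmono (d + 1) (c k) hpd
      omega
    -- main inequality: a < H (c k) + H (d + 1 - c k)
    have hkeyZ : (a : ℤ) < (∑ x ∈ range (c k), h x : ℕ)
        + (∑ x ∈ range (d + 1 - c k), h x : ℕ) := by
      by_cases hcase : 2 * c k ≤ d + 1
      · have hj : c k - 1 ≤ (d - 1) / 2 := by omega
        have hps := hpos (c k - 1) hj
        rw [show c k - 1 + 1 = c k from by omega] at hps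
        rw [Finset.sum_sub_distrib] at hps
        have hks := key_split d h (c k - 1) (by omega)
        rw [show c k - 1 + 1 = c k from by omega,
          show d - (c k - 1) = d + 1 - c k from by omega] at hks
        have hcast : (∑ x ∈ range (c k), (h (d - x) : ℤ))
            = ((∑ x ∈ range (c k), h (d - x) : ℕ) : ℤ) := by push_cast; ring
        rw [hcast] at hps
        have hcast2 : (∑ x ∈ range (c k), (h x : ℤ))
            = ((∑ x ∈ range (c k), h x : ℕ) : ℤ) := by push_cast; ring
        rw [hcast2] at hps
        have : a = (∑ x ∈ range (d + 1 - c k), h x) + ∑ x ∈ range (c k), h (d - x) := by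
          rw [ha, hks]
        omega
      · push_neg at hcase
        have hj : d - c k ≤ (d - 1) / 2 := by omega
        have hps := hpos (d - c k) hj
        rw [Finset.sum_sub_distrib] at hps
        have hks := key_split d h (d - c k) (by omega)
        rw [show d - (d - c k) = c k from by omega] at hks
        rw [show d - c k + 1 = d + 1 - c k from by omega] at hps hks
        have hcast : (∑ x ∈ range (d + 1 - c k), (h (d - x) : ℤ))
            = ((∑ x ∈ range (d + 1 - c k), h (d - x) : ℕ) : ℤ) := by push_cast; ring
        rw [hcast] at hps
        have hcast2 : (∑ x ∈ range (d + 1 - c k), (h x : ℤ))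
            = ((∑ x ∈ range (d + 1 - c k), h x : ℕ) : ℤ) := by push_cast; ring
        rw [hcast2] at hps
        have : a = (∑ x ∈ range (c k), h x) + ∑ x ∈ range (d + 1 - c k), h (d - x) := by
          rw [ha, hks]
        omega
    have hqge : d + 1 - c k ≤ c (a - k) := by omega
    have hmq := hmono (d + 1 - c k) (c (a - k)) hqge
    have : (∑ x ∈ range (c k), h x) + (∑ x ∈ range (d + 1 - c k), h x) ≤ a := by omega
    omega
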